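/- Let (𝒜, ν) be a measure space of actions carrying an expert density p_data ≥ 0 with ∫_𝒜 p_data dν = 1, and let (Z, μ) be a σ-finite latent measure space with prior density π (∫ π dμ = 1), jointly measurable likelihood ℓ(a, z) ≥ 0, and for each a an everywhere-positive posterior density z ↦ q(z|a) with ∫ q(·|a) dμ = 1. Let S ⊆ Z be measurable and fix d ∈ (0,1) with π(S) = ∫_S π dμ = 1 − d and q(S|a) = ∫_S q(z|a) dμ(z) = 1 − d for ν-a.e. a. Define p(a|S) = (1/(1−d)) ∫_S ℓ(a,z)π(z) dμ(z), p(a|Sᶜ) = (1/d) ∫_{Sᶜ} ℓ(a,z)π(z) dμ(z), the importance weight w(z, a) = ℓ(a,z)π(z)/q(z|a), and the conditional expected weights W_S(a) = (1/q(S|a)) ∫_S w(z,a) q(z|a) dμ(z) and W_{Sᶜ}(a) = (1/q(Sᶜ|a)) ∫_{Sᶜ} w(z,a) q(z|a) dμ(z). Assume p(·|S) and p(·|Sᶜ) are strictly positive p_data-a.e., and that D_KL(p_data ‖ p(·|S)) and D_KL(p_data ‖ p(·|Sᶜ)) are finite. Then the expected log-ratio of conditional importance weights equals the information benefit of the strategy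 S: ∫_𝒜 p_data(a) · log(W_S(a) / W_{Sᶜ}(a)) dν(a) = D_KL(p_data ‖ p(·|Sᶜ)) − D_KL(p_data ‖ p(·|S)). -/
import Mathlib


open MeasureTheory

/-- **Importance weight ratios estimate information benefit.**
Let `(𝒜, ν)` be a measure space of actions with expert density `pdata`
(`∫ pdata dν = 1`), and `(Z, μ)` a σ-finite latent space with prior density
`π` (`∫ π dμ = 1`), jointly measurable nonnegative likelihood `ℓ a z`, and
for each `a` an everywhere-positive posterior density `q a` with
`∫ q a dμ = 1`.  Let `S ⊆ Z` be measurable, `d ∈ (0,1)`, with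
`π(S) = 1 − d` and `q(S|a) = 1 − d` for ν-a.e. `a`.  With conditional
action likelihoods `p(a|S) = (1/(1−d)) ∫_S ℓ a z * π z dμ`,
`p(a|Sᶜ) = (1/d) ∫_{Sᶜ} ℓ a z * π z dμ` (strictly positive `pdata`-a.e.),
importance weights `w z a = ℓ a z * π z / q a z`, conditional expected
weights `W_T(a) = (1/q(T|a)) ∫_T w q dμ`, and both KL divergences
`D_KL(pdata ‖ p(·|S))`, `D_KL(pdata ‖ p(·|Sᶜ))` finite (the KL integrands
are integrable), the expected log-ratio of conditional importance weights
equals the information benefit: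
`∫ pdata(a) log(W_S(a)/W_{Sᶜ}(a)) dν = D_KL(pdata ‖ p(·|Sᶜ)) − D_KL(pdata ‖ p(·|S))`. -/
theorem expected_log_weight_ratio_eq_information_benefit
    {A : Type*} [MeasurableSpace A] (ν : Measure A)
    {Z : Type*} [MeasurableSpace Z] (μ : Measure Z) [SigmaFinite μ]
    (pdata : A → ℝ)
    (hpdata_meas : Measurable pdata) (hpdata_nonneg : ∀ a, 0 ≤ pdata a)
    (hpdata_int : ∫ a, pdata a ∂ν = 1)
    (π : Z → ℝ)
    (hπ_meas : Measurable π) (hπ_nonneg : ∀ z, 0 ≤ π z)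
    (hπ_int : ∫ z, π z ∂μ = 1)
    (ℓ : A → Z → ℝ)
    (hℓ_meas : Measurable (Function.uncurry ℓ)) (hℓ_nonneg : ∀ a z, 0 ≤ ℓ a z)
    (q : A → Z → ℝ)
    (hq_meas : Measurable (Function.uncurry q)) (hq_pos : ∀ a z, 0 < q a z)
    (hq_int : ∀ a, ∫ z, q a z ∂μ = 1)
    (S : Set Z) (hS : MeasurableSet S)
    (d : ℝ) (hd0 : 0 < d) (hd1 : d < 1)
    (hπS : ∫ z in S, π z ∂μ = 1 - d)
    (hqS : ∀ᵐ a ∂ν, ∫ z in S, q a z ∂μ = 1 - d)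
    (hpS_pos : ∀ᵐ a ∂(ν.withDensity fun a => ENNReal.ofReal (pdata a)),
        0 < (1 / (1 - d)) * ∫ z in S, ℓ a z * π z ∂μ)
    (hpSc_pos : ∀ᵐ a ∂(ν.withDensity fun a => ENNReal.ofReal (pdata a)),
        0 < (1 / d) * ∫ z in Sᶜ, ℓ a z * π z ∂μ)
    (hKLS_fin : Integrable (fun a => pdata a *
        Real.log (pdata a / ((1 / (1 - d)) * ∫ z in S, ℓ a z * π z ∂μ))) ν)
    (hKLSc_fin : Integrable (fun a => pdata a *
        Real.log (pdata a / ((1 / d) * ∫ z in Sᶜ, ℓ a z * π z ∂μ))) ν) :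
    ∫ a, pdata a * Real.log
        (((1 / ∫ z in S, q a z ∂μ) *
            ∫ z in S, (ℓ a z * π z / q a z) * q a z ∂μ) /
          ((1 / ∫ z in Sᶜ, q a z ∂μ) *
            ∫ z in Sᶜ, (ℓ a z * π z / q a z) * q a z ∂μ)) ∂ν
      = (∫ a, pdata a *
            Real.log (pdata a / ((1 / d) * ∫ z in Sᶜ, ℓ a z * π z ∂μ)) ∂ν)
        - ∫ a, pdata a *
            Real.log (pdata a / ((1 / (1 - d)) * ∫ z in S, ℓ a z * π z ∂μ)) ∂ν := by
  have hpS := (ae_withDensity_iff hpdata_meas.ennreal_ofReal).mp hpS_pos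
  have hpSc := (ae_withDensity_iff hpdata_meas.ennreal_ofReal).mp hpSc_pos
  have key : ∀ᵐ a ∂ν,
      pdata a * Real.log
        (((1 / ∫ z in S, q a z ∂μ) *
            ∫ z in S, (ℓ a z * π z / q a z) * q a z ∂μ) /
          ((1 / ∫ z in Sᶜ, q a z ∂μ) *
            ∫ z in Sᶜ, (ℓ a z * π z / q a z) * q a z ∂μ))
      = pdata a * Real.log (pdata a / ((1 / d) * ∫ z in Sᶜ, ℓ a z * π z ∂μ))
        - pdata a * Real.log (pdata a / ((1 / (1 - d)) * ∫ z in S, ℓ a z * π z ∂μ)) := by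
    filter_upwards [hqS, hpS, hpSc] with a hqa hS' hSc'
    have hqint : Integrable (fun z => q a z) μ := by
      by_contra h
      have := hq_int a
      rw [integral_undef h] at this
      norm_num at this
    have hqSc : ∫ z in Sᶜ, q a z ∂μ = d := by
      have h2 := integral_add_compl hS hqint
      rw [hqa, hq_int a] at h2
      linarith
    have hw : ∀ z, (ℓ a z * π z / q a z) * q a z = ℓ a z * π z := fun z =>
      div_mul_cancel₀ _ (hq_pos a z).ne'
    simp only [hw, hqa, hqSc]
    rcases eq_or_lt_of_le (hpdata_nonneg a) with hp0 | hp
    · simp [← hp0]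
    · have hne : ENNReal.ofReal (pdata a) ≠ 0 := by
        simp [ENNReal.ofReal_pos.mpr hp, ne_of_gt]
      have hx := hS' hne
      have hy := hSc' hne
      rw [Real.log_div hx.ne' hy.ne', Real.log_div hp.ne' hy.ne',
          Real.log_div hp.ne' hx.ne']
      ring
  rw [integral_congr_ae key, integral_sub hKLSc_fin hKLS_fin]
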